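/- arXiv:2310.07595 — 2 statements merged into one kernel-verified Lean document; each statement's English description precedes it below -/
import Mathlib

section
/- For x ≥ 1 let L(x) denote the smallest positive integer with 2^{L(x)} > L(x)·x + 1. Let ε ∈ (0,1), let z > 0, and let J be a finite set of reals contained in the interval [z/2, z] with |J| ≥ L(4/ε). Then there exist nonempty disjoint subsets X, Y ⊆ J with R(X,Y) ≤ 1 + ε. -/
/-! Pigeonhole on subset sums: the `2^|J|` subsets of `J` have sums in `[0, Σ J]`, and
`|J| ≥ L(4/ε)` makes them outnumber the intervals of length `δ = εz/4` needed to cover it.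
Two distinct subsets `A ≠ B` with `|Σ A - Σ B| < δ` give `X = A \ B`, `Y = B \ A` with the same
difference; since every element is at least `z/2 > δ`, neither can be empty, and then
`|Σ X - Σ Y| < εz/4 ≤ (ε/2) min(Σ X, Σ Y)`. -/

/-- The ratio `R(X,Y) = max{Σ(X)/Σ(Y), Σ(Y)/Σ(X)}` of two finite sets of reals. -/
noncomputable def ratio (X Y : Finset ℝ) : ℝ :=
  max (X.sum id / Y.sum id) (Y.sum id / X.sum id)

/-- `L(x)`: the smallest positive integer `L` with `2^L > L·x + 1`. -/
noncomputable def LL (x : ℝ) : ℕ :=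
  sInf {L : ℕ | 0 < L ∧ (2 : ℝ) ^ L > L * x + 1}

lemma LL_spec (x : ℝ) : 0 < LL x ∧ (2 : ℝ) ^ LL x > LL x * x + 1 := by
  refine Nat.sInf_mem (s := {L : ℕ | 0 < L ∧ (2 : ℝ) ^ L > L * x + 1}) ?_
  obtain ⟨N, hN⟩ := exists_nat_ge x
  refine ⟨2 * N + 2, by omega, ?_⟩
  have hN2 : (N : ℝ) + 1 ≤ 2 ^ N := by exact_mod_cast Nat.lt_two_pow_self (n := N)
  have h4 : (2 : ℝ) ^ (2 * N + 2) = 4 * (2 ^ N) ^ 2 := by ring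
  push_cast
  rw [h4]
  nlinarith [sq_nonneg ((N : ℝ) + 1)]

lemma lt_two_pow_of_LL_le {x : ℝ} (hx : 0 ≤ x) {n : ℕ} (hn : LL x ≤ n) :
    (n : ℝ) * x + 1 < 2 ^ n := by
  induction n, hn using Nat.le_induction with
  | base => exact (LL_spec x).2
  | succ n hn ih =>
    have h1 : (1 : ℝ) ≤ n := by exact_mod_cast (LL_spec x).1.trans_le hn
    calc ((n + 1 : ℕ) : ℝ) * x + 1 ≤ 2 * (n * x + 1) := by push_cast; nlinarith
      _ < 2 * 2 ^ n := by linarith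
      _ = 2 ^ (n + 1) := by ring

namespace Finset

/-- Pigeonhole with the `⌊S/δ⌋₊ + 1` intervals `[kδ, (k+1)δ)` covering `[0, S]`. -/
theorem exists_ne_abs_sub_lt_of_card_lt {ι : Type*} {s : Finset ι} {g : ι → ℝ}
    {S δ : ℝ} (hδ : 0 < δ) (hS : 0 ≤ S) (hg : ∀ i ∈ s, 0 ≤ g i ∧ g i ≤ S)
    (hs : S / δ + 1 < #s) : ∃ i ∈ s, ∃ j ∈ s, i ≠ j ∧ |g i - g j| < δ := by
  have hbins : #(range (⌊S / δ⌋₊ + 1)) < #s := by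
    have hfloor : (⌊S / δ⌋₊ : ℝ) ≤ S / δ := Nat.floor_le (by positivity)
    rw [card_range]
    exact_mod_cast (by linarith : (⌊S / δ⌋₊ : ℝ) + 1 < #s)
  have hmaps : Set.MapsTo (fun i => ⌊g i / δ⌋₊) s (range (⌊S / δ⌋₊ + 1)) := by
    intro i hi
    simp only [coe_range, Set.mem_Iio, Order.lt_add_one_iff]
    exact Nat.floor_le_floor (by gcongr; exact (hg i hi).2)
  obtain ⟨i, hi, j, hj, hij, hfloor⟩ := exists_ne_map_eq_of_card_lt_of_maps_to hbins hmaps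
  refine ⟨i, hi, j, hj, hij, ?_⟩
  have hdiv : |g i / δ - g j / δ| < 1 := by
    refine Int.abs_sub_lt_one_of_floor_eq_floor ?_
    rw [← Int.natCast_floor_eq_floor (div_nonneg (hg i hi).1 hδ.le),
      ← Int.natCast_floor_eq_floor (div_nonneg (hg j hj).1 hδ.le)]
    exact congrArg _ hfloor
  rwa [← sub_div, abs_div, abs_of_pos hδ, div_lt_one hδ] at hdiv

theorem exists_ne_subsets_abs_sum_sub_lt {J : Finset ℝ} {δ : ℝ} (hδ : 0 < δ)
    (hJ : ∀ x ∈ J, 0 ≤ x) (hcard : J.sum id / δ + 1 < 2 ^ #J) :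
    ∃ A ⊆ J, ∃ B ⊆ J, A ≠ B ∧ |A.sum id - B.sum id| < δ := by
  have hsum : ∀ A ∈ J.powerset, 0 ≤ A.sum id ∧ A.sum id ≤ J.sum id := fun A hA => by
    rw [mem_powerset] at hA
    exact ⟨sum_nonneg fun x hx => hJ x (hA hx),
      sum_le_sum_of_subset_of_nonneg hA fun x hx _ => hJ x hx⟩
  obtain ⟨A, hA, B, hB, hAB, hclose⟩ := exists_ne_abs_sub_lt_of_card_lt hδ
    (sum_nonneg hJ) hsum (by rwa [card_powerset, Nat.cast_pow, Nat.cast_ofNat])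
  exact ⟨A, mem_powerset.1 hA, B, mem_powerset.1 hB, hAB, hclose⟩

theorem le_sum_id_of_nonempty {s : Finset ℝ} {m : ℝ} (hm : 0 ≤ m) (hs : s.Nonempty)
    (h : ∀ x ∈ s, m ≤ x) : m ≤ s.sum id := by
  obtain ⟨a, ha⟩ := hs
  exact (h a ha).trans (single_le_sum (f := id) (fun x hx => hm.trans (h x hx)) ha)

theorem sdiff_nonempty_of_abs_sum_sub_lt {A B : Finset ℝ} {m : ℝ}
    (hB : ∀ x ∈ B, m ≤ x) (hAB : A ≠ B) (h : |A.sum id - B.sum id| < m) :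
    (A \ B).Nonempty := by
  by_contra hempty
  have hsub : A ⊆ B := by
    rwa [not_nonempty_iff_eq_empty, sdiff_eq_empty_iff_subset] at hempty
  have hBA : (B \ A).Nonempty := sdiff_nonempty.2 fun h' => hAB (Subset.antisymm hsub h')
  have hm : 0 ≤ m := (abs_nonneg _).trans h.le
  have hlow := le_sum_id_of_nonempty hm hBA fun x hx => hB x (mem_sdiff.1 hx).1
  rw [abs_sub_comm, ← sum_sdiff_eq_sub hsub, abs_of_nonneg (by linarith)] at h
  linarith

end Finset

theorem ratio_le_one_add {X Y : Finset ℝ} {m ε : ℝ} (hm : 0 < m) (hX : m ≤ X.sum id)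
    (hY : m ≤ Y.sum id) (h : |X.sum id - Y.sum id| ≤ ε * m) : ratio X Y ≤ 1 + ε := by
  have hε : 0 ≤ ε := nonneg_of_mul_nonneg_left ((abs_nonneg _).trans h) hm
  rw [abs_le] at h
  refine max_le ?_ ?_ <;> rw [div_le_iff₀ (by linarith)] <;> nlinarith

/-- **Dense case.** If `J ⊆ [z/2, z]` with `z > 0` and `|J| ≥ L(4/ε)`, then there are
nonempty disjoint subsets `X, Y ⊆ J` with `R(X,Y) ≤ 1 + ε`. -/
theorem dense_case (ε : ℝ) (hε : ε ∈ Set.Ioo (0 : ℝ) 1) (z : ℝ) (hz : 0 < z)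
    (J : Finset ℝ) (hJ : ∀ x ∈ J, z / 2 ≤ x ∧ x ≤ z) (hcard : LL (4 / ε) ≤ J.card) :
    ∃ X Y : Finset ℝ, X ⊆ J ∧ Y ⊆ J ∧ Disjoint X Y ∧ X.Nonempty ∧ Y.Nonempty ∧
      ratio X Y ≤ 1 + ε := by
  obtain ⟨hε0, hε1⟩ := hε
  have hδ : 0 < ε * z / 4 := by positivity
  have hlow : ∀ x ∈ J, z / 2 ≤ x := fun x hx => (hJ x hx).1
  have hsumJ : J.sum id ≤ J.card * z := by
    simpa using Finset.sum_le_card_nsmul J id z fun x hx => (hJ x hx).2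
  have hbins : J.sum id / (ε * z / 4) + 1 < 2 ^ J.card := by
    calc J.sum id / (ε * z / 4) + 1 ≤ J.card * z / (ε * z / 4) + 1 := by gcongr
      _ = J.card * (4 / ε) + 1 := by field_simp
      _ < 2 ^ J.card := lt_two_pow_of_LL_le (by positivity) hcard
  have hsum_low : ∀ C ⊆ J, C.Nonempty → z / 2 ≤ C.sum id := fun C hC hne =>
    Finset.le_sum_id_of_nonempty (by positivity) hne fun x hx => hlow x (hC hx)
  obtain ⟨A, hA, B, hB, hAB, hclose⟩ :=
    Finset.exists_ne_subsets_abs_sum_sub_lt hδ (fun x hx => by linarith [hlow x hx]) hbins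
  have hclose' : |A.sum id - B.sum id| < z / 2 := hclose.trans (by nlinarith)
  have hX : (A \ B).Nonempty :=
    Finset.sdiff_nonempty_of_abs_sum_sub_lt (fun x hx => hlow x (hB hx)) hAB hclose'
  have hY : (B \ A).Nonempty :=
    Finset.sdiff_nonempty_of_abs_sum_sub_lt (fun x hx => hlow x (hA hx)) hAB.symm
      (by rwa [abs_sub_comm])
  have hXJ : A \ B ⊆ J := Finset.sdiff_subset.trans hA
  have hYJ : B \ A ⊆ J := Finset.sdiff_subset.trans hB
  refine ⟨A \ B, B \ A, hXJ, hYJ, disjoint_sdiff_sdiff, hX, hY,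
    ratio_le_one_add (by positivity) (hsum_low _ hXJ hX) (hsum_low _ hYJ hY) ?_⟩
  rw [Finset.sum_sdiff_sub_sum_sdiff]
  linarith
end

section
/- Let ε ∈ (0,1), let a₁, …, aₙ be distinct positive reals with n ≥ 2, and let 0 < δ ≤ (ε/(9n)) · max_i a_i. Define the rounded values ã_i := δ·⌈a_i/δ⌉. Define OPT̃_L as the minimum over all pairs of nonempty disjoint index sets A, B ⊆ {1,…,n} containing some index attaining max_i ã_i of max{Σ_{i∈A} ã_i / Σ_{i∈B} ã_i, Σ_{i∈B} ã_i / Σ_{i∈A} ã_i}. Then OPT̃_L ≤ (1 + ε/9) · OPT_L({a₁,…,aₙ}). -/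
/-- `OPT_L(I)`: the minimum ratio over all nonempty disjoint subsets `X, Y ⊆ I` such that
`max(I) ∈ X ∪ Y` (i.e. some element of `X ∪ Y` is an upper bound of `I`). -/
noncomputable def OPTL (I : Finset ℝ) : ℝ :=
  sInf {r | ∃ X Y : Finset ℝ, X ⊆ I ∧ Y ⊆ I ∧ Disjoint X Y ∧
    X.Nonempty ∧ Y.Nonempty ∧ (∃ m ∈ X ∪ Y, ∀ x ∈ I, x ≤ m) ∧ r = ratio X Y}

open Finset

noncomputable def maxRatio (x y : ℝ) : ℝ := max (x / y) (y / x)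

lemma maxRatio_comm (x y : ℝ) : maxRatio x y = maxRatio y x := max_comm _ _

lemma one_le_maxRatio {x y : ℝ} (hx : 0 < x) (hy : 0 < y) : 1 ≤ maxRatio x y := by
  rcases le_total x y with h | h
  · exact ((one_le_div hx).2 h).trans (le_max_right _ _)
  · exact ((one_le_div hy).2 h).trans (le_max_left _ _)

lemma maxRatio_le_one_add_mul {x y x' y' c : ℝ} (hx : 0 < x) (hy : 0 < y) (hc : 0 ≤ c)
    (hxx' : x ≤ x') (hx'x : x' ≤ (1 + c) * x) (hyy' : y ≤ y') (hy'y : y' ≤ y + c * x) :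
    maxRatio x' y' ≤ (1 + c) * maxRatio x y := by
  have hr := one_le_maxRatio hx hy
  refine max_le ?_ ?_
  · calc x' / y' ≤ (1 + c) * x / y := div_le_div₀ (by positivity) hx'x hy hyy'
      _ = (1 + c) * (x / y) := mul_div_assoc _ _ _
      _ ≤ (1 + c) * maxRatio x y := by gcongr; exact le_max_left _ _
  · calc y' / x' ≤ (y + c * x) / x := div_le_div₀ (by positivity) hy'y hx hxx'
      _ = y / x + c := by field_simp
      _ ≤ maxRatio x y + c := by gcongr; exact le_max_right _ _
      _ ≤ (1 + c) * maxRatio x y := by nlinarith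

lemma csInf_le_mul_csInf {S T : Set ℝ} {c : ℝ} (hS : BddBelow S) (hT : T.Nonempty) (hc : 0 < c)
    (h : ∀ t ∈ T, ∃ s ∈ S, s ≤ c * t) : sInf S ≤ c * sInf T := by
  rw [← div_le_iff₀' hc]
  refine le_csInf hT fun t ht => ?_
  obtain ⟨s, hs, hst⟩ := h t ht
  rw [div_le_iff₀' hc]
  exact (csInf_le hS hs).trans hst

section IndexRatios

variable {ι : Type*}

lemma sum_le_sum_add_card_mul [Fintype ι] {a s : ι → ℝ} {δ : ℝ} (hδ : 0 ≤ δ)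
    (hsa : ∀ i, s i ≤ a i + δ) (C : Finset ι) :
    ∑ i ∈ C, s i ≤ ∑ i ∈ C, a i + Fintype.card ι * δ :=
  calc ∑ i ∈ C, s i ≤ ∑ i ∈ C, (a i + δ) := sum_le_sum fun i _ => hsa i
    _ = ∑ i ∈ C, a i + #C * δ := by rw [sum_add_distrib, sum_const, nsmul_eq_mul]
    _ ≤ ∑ i ∈ C, a i + Fintype.card ι * δ := by gcongr; exact card_le_univ C

variable [DecidableEq ι]

/-- `OPT_L` in index form: ratios of the `w`-weights of disjoint nonempty index sets, one of
which contains an index of maximal weight. -/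
def indexRatios (w : ι → ℝ) : Set ℝ :=
  {r | ∃ A B : Finset ι, A.Nonempty ∧ B.Nonempty ∧ Disjoint A B ∧
    (∃ i ∈ A ∪ B, ∀ j, w j ≤ w i) ∧ r = maxRatio (∑ i ∈ A, w i) (∑ i ∈ B, w i)}

lemma indexRatios_nonempty [Fintype ι] (w : ι → ℝ) (hι : 1 < Fintype.card ι) :
    (indexRatios w).Nonempty := by
  have : Nonempty ι := Fintype.card_pos_iff.1 (by omega)
  obtain ⟨i, -, hi⟩ := exists_max_image univ w univ_nonempty
  obtain ⟨j, hj⟩ := Fintype.exists_ne_of_one_lt_card hι i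
  exact ⟨_, {i}, {j}, singleton_nonempty i, singleton_nonempty j,
    disjoint_singleton.2 hj.symm, ⟨i, by simp, fun k => hi k (mem_univ k)⟩, rfl⟩

lemma bddBelow_indexRatios {w : ι → ℝ} (hw : ∀ i, 0 < w i) : BddBelow (indexRatios w) := by
  refine ⟨1, ?_⟩
  rintro _ ⟨A, B, hA, hB, -, -, rfl⟩
  exact one_le_maxRatio (sum_pos (fun i _ => hw i) hA) (sum_pos (fun i _ => hw i) hB)

lemma OPTL_image_eq [Fintype ι] {a : ι → ℝ} (ha : Function.Injective a) :
    OPTL (univ.image a) = sInf (indexRatios a) := by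
  have hratio (A B : Finset ι) :
      ratio (A.image a) (B.image a) = maxRatio (∑ i ∈ A, a i) (∑ i ∈ B, a i) := by
    simp only [ratio, maxRatio, sum_image ha.injOn, id]
  unfold OPTL indexRatios
  congr 1
  ext r
  constructor
  · rintro ⟨X, Y, hX, hY, hXY, hXne, hYne, ⟨m, hm, hmax⟩, rfl⟩
    obtain ⟨A, -, rfl⟩ := subset_image_iff.1 hX
    obtain ⟨B, -, rfl⟩ := subset_image_iff.1 hY
    rw [← image_union, mem_image] at hm
    obtain ⟨i, hi, rfl⟩ := hm
    exact ⟨A, B, image_nonempty.1 hXne, image_nonempty.1 hYne, (disjoint_image ha).1 hXY,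
      ⟨i, hi, fun j => hmax _ (mem_image_of_mem a (mem_univ j))⟩, hratio A B⟩
  · rintro ⟨A, B, hA, hB, hAB, ⟨i, hi, hmax⟩, rfl⟩
    refine ⟨A.image a, B.image a, image_subset_image (subset_univ A),
      image_subset_image (subset_univ B), (disjoint_image ha).2 hAB, hA.image a, hB.image a,
      ⟨a i, ?_, ?_⟩, (hratio A B).symm⟩
    · rw [← image_union]; exact mem_image_of_mem a hi
    · simpa using hmax

theorem sInf_indexRatios_le_one_add_mul [Fintype ι] {a s : ι → ℝ} {δ c : ℝ}
    (hι : 1 < Fintype.card ι) (ha : ∀ i, 0 < a i) (hc : 0 ≤ c) (has : ∀ i, a i ≤ s i)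
    (hsa : ∀ i, s i ≤ a i + δ) (hmono : ∀ i j, a i ≤ a j → s i ≤ s j)
    (hδ : ∀ i, (∀ j, a j ≤ a i) → Fintype.card ι * δ ≤ c * a i) :
    sInf (indexRatios s) ≤ (1 + c) * sInf (indexRatios a) := by
  refine csInf_le_mul_csInf (bddBelow_indexRatios fun i => (ha i).trans_le (has i))
    (indexRatios_nonempty a hι) (by linarith) ?_
  rintro _ ⟨A, B, hA, hB, hAB, ⟨i, hi, hmax⟩, rfl⟩
  refine ⟨_, ⟨A, B, hA, hB, hAB, ⟨i, hi, fun j => hmono j i (hmax j)⟩, rfl⟩, ?_⟩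
  have hδ0 : 0 ≤ δ := by linarith [has i, hsa i]
  -- The slack `|ι| δ` is charged to the side containing the maximal weight.
  have hside {A B : Finset ι} (hiA : i ∈ A) (hB : B.Nonempty) :
      maxRatio (∑ j ∈ A, s j) (∑ j ∈ B, s j) ≤
        (1 + c) * maxRatio (∑ j ∈ A, a j) (∑ j ∈ B, a j) := by
    have hslack : Fintype.card ι * δ ≤ c * ∑ j ∈ A, a j :=
      (hδ i hmax).trans (by gcongr; exact single_le_sum (fun j _ => (ha j).le) hiA)
    exact maxRatio_le_one_add_mul (sum_pos (fun j _ => ha j) ⟨i, hiA⟩)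
      (sum_pos (fun j _ => ha j) hB) hc (sum_le_sum fun j _ => has j)
      (by linarith [sum_le_sum_add_card_mul hδ0 hsa A]) (sum_le_sum fun j _ => has j)
      (by linarith [sum_le_sum_add_card_mul hδ0 hsa B])
  rcases mem_union.1 hi with hiA | hiB
  · exact hside hiA hB
  · rw [maxRatio_comm, maxRatio_comm (∑ j ∈ A, a j)]
    exact hside hiB hA

end IndexRatios

section RoundUp

variable {δ : ℝ} (hδ : 0 < δ)
include hδ

lemma le_mul_ceil_div (x : ℝ) : x ≤ δ * ⌈x / δ⌉ := by
  rw [← div_le_iff₀' hδ]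
  exact Int.le_ceil _

lemma mul_ceil_div_le_add (x : ℝ) : δ * ⌈x / δ⌉ ≤ x + δ := by
  have := (Int.ceil_lt_add_one (x / δ)).le
  calc δ * ⌈x / δ⌉ ≤ δ * (x / δ + 1) := by gcongr
    _ = x + δ := by field_simp

lemma monotone_mul_ceil_div : Monotone fun x : ℝ => δ * ⌈x / δ⌉ := fun _ _ h =>
  mul_le_mul_of_nonneg_left (by exact_mod_cast Int.ceil_mono (by gcongr)) hδ.le

end RoundUp

/-- **Rounding II, first part (Lemma 4.11).** Rounding each item up to a multiple of
`δ ≤ (ε/(9n))·max_i a_i` increases the optimum `OPT_L` by at most a factor `1 + ε/9`: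
`OPT̃_L ≤ (1 + ε/9) · OPT_L({a₁,…,aₙ})`. -/
theorem rounding_two_opt_bound (ε : ℝ) (hε : ε ∈ Set.Ioo (0 : ℝ) 1)
    (n : ℕ) (hn : 2 ≤ n) (a : Fin n → ℝ)
    (hinj : Function.Injective a) (hpos : ∀ i, 0 < a i)
    (δ : ℝ) (hδ0 : 0 < δ)
    (hδ : δ ≤ ε / (9 * n) *
      (Finset.univ.sup' ⟨⟨0, by omega⟩, Finset.mem_univ _⟩ a)) :
    sInf {r : ℝ | ∃ A B : Finset (Fin n), A.Nonempty ∧ B.Nonempty ∧ Disjoint A B ∧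
        (∃ i ∈ A ∪ B, ∀ j, δ * (⌈a j / δ⌉ : ℝ) ≤ δ * (⌈a i / δ⌉ : ℝ)) ∧
        r = max ((∑ i ∈ A, δ * (⌈a i / δ⌉ : ℝ)) / (∑ i ∈ B, δ * (⌈a i / δ⌉ : ℝ)))
                ((∑ i ∈ B, δ * (⌈a i / δ⌉ : ℝ)) / (∑ i ∈ A, δ * (⌈a i / δ⌉ : ℝ)))}
      ≤ (1 + ε / 9) * OPTL (Finset.univ.image a) := by
  rw [OPTL_image_eq hinj]
  refine sInf_indexRatios_le_one_add_mul (by simp only [Fintype.card_fin]; omega) hpos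
    (by linarith [hε.1]) (fun i => le_mul_ceil_div hδ0 _) (fun i => mul_ceil_div_le_add hδ0 _)
    (fun i j h => monotone_mul_ceil_div hδ0 h) fun i hi => ?_
  rw [le_antisymm (sup'_le _ _ fun j _ => hi j) (le_sup' a (mem_univ i))] at hδ
  have hn0 : (n : ℝ) ≠ 0 := by positivity
  calc (Fintype.card (Fin n) : ℝ) * δ ≤ n * (ε / (9 * n) * a i) := by
        rw [Fintype.card_fin]; gcongr
    _ = ε / 9 * a i := by field_simp
end
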